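/- arXiv:2207.07891 — 3 statements merged into one kernel-verified Lean document; each statement's English description precedes it below -/
import Mathlib

section
/- (Existence and uniqueness of the frictional slip-rate, core of Theorem 3.1.) Let η_l, η_m > 0 and σ_n > 0 be real constants, let Φ_l, Φ_m be real numbers with Φ_l² + Φ_m² > 0, and let f : ℝ → ℝ be continuous on [0,∞), strictly increasing on [0,∞), with f(0) = 0 and f(V) ≥ 0 for all V ≥ 0. Then there exists a unique θ* > 0 such that Θ(θ*) = 1, where Θ(θ) = sqrt( Φ_l²/(η_l·θ + σ_n·f(θ))² + Φ_m²/(η_m·θ + σ_n·f(θ))² ); i.e., the level set { θ > 0 : Θ(θ) = 1 } contains precisely one element. -/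
set_option maxHeartbeats 1000000


/-- Existence and uniqueness of the frictional slip-rate: there is exactly one
θ* > 0 with Θ(θ*) = 1 (core of Theorem 3.1). -/
theorem slip_rate_exists_unique
    (ηl ηm σn : ℝ) (hηl : 0 < ηl) (hηm : 0 < ηm) (hσn : 0 < σn)
    (Φl Φm : ℝ) (hΦ : 0 < Φl ^ 2 + Φm ^ 2)
    (f : ℝ → ℝ)
    (hfc : ContinuousOn f (Set.Ici 0))
    (hfmono : StrictMonoOn f (Set.Ici 0))
    (hf0 : f 0 = 0)
    (hfnn : ∀ V ≥ 0, 0 ≤ f V)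
    (Θ : ℝ → ℝ)
    (hΘ : ∀ θ, Θ θ = Real.sqrt (Φl ^ 2 / (ηl * θ + σn * f θ) ^ 2
        + Φm ^ 2 / (ηm * θ + σn * f θ) ^ 2)) :
    ∃! θ : ℝ, 0 < θ ∧ Θ θ = 1 := by
  set g : ℝ → ℝ := fun θ => Φl ^ 2 / (ηl * θ + σn * f θ) ^ 2
      + Φm ^ 2 / (ηm * θ + σn * f θ) ^ 2 with hg
  have key : ∀ θ, Θ θ = Real.sqrt (g θ) := fun θ => hΘ θ
  clear_value g
  -- positivity of denominators
  have dpos : ∀ η : ℝ, 0 < η → ∀ θ : ℝ, 0 < θ → 0 < η * θ + σn * f θ := by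
    intro η hη θ hθ
    have h1 := hfnn θ hθ.le
    nlinarith
  -- strict monotonicity of denominators
  have dlt : ∀ η : ℝ, 0 < η → ∀ x y : ℝ, 0 < x → x < y →
      η * x + σn * f x < η * y + σn * f y := by
    intro η hη x y hx hxy
    have hf := hfmono.monotoneOn (Set.mem_Ici.2 hx.le)
      (Set.mem_Ici.2 (hx.trans hxy).le) hxy.le
    nlinarith
  -- the squared version Θ θ = 1 ↔ g θ = 1
  have gθ_of : ∀ θ, Θ θ = 1 → g θ = 1 := by
    intro θ hθ1
    rw [key θ] at hθ1
    exact (Real.sqrt_eq_one.1 hθ1)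
  -- strict antitonicity of g on (0,∞)
  have ganti : ∀ x y : ℝ, 0 < x → x < y → g y < g x := by
    intro x y hx hxy
    have hy : 0 < y := hx.trans hxy
    have hdl_x := dpos ηl hηl x hx
    have hdl_y := dpos ηl hηl y hy
    have hdm_x := dpos ηm hηm x hx
    have hdm_y := dpos ηm hηm y hy
    have hdl := dlt ηl hηl x y hx hxy
    have hdm := dlt ηm hηm x y hx hxy
    have hsl : (ηl * x + σn * f x) ^ 2 < (ηl * y + σn * f y) ^ 2 := by nlinarith
    have hsm : (ηm * x + σn * f x) ^ 2 < (ηm * y + σn * f y) ^ 2 := by nlinarith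
    have hcase : 0 < Φl ^ 2 ∨ 0 < Φm ^ 2 := by
      by_contra h
      push_neg at h
      nlinarith [sq_nonneg Φl, sq_nonneg Φm]
    have hl_le : Φl ^ 2 / (ηl * y + σn * f y) ^ 2 ≤ Φl ^ 2 / (ηl * x + σn * f x) ^ 2 :=
      div_le_div_of_nonneg_left (sq_nonneg Φl) (by positivity) hsl.le
    have hm_le : Φm ^ 2 / (ηm * y + σn * f y) ^ 2 ≤ Φm ^ 2 / (ηm * x + σn * f x) ^ 2 :=
      div_le_div_of_nonneg_left (sq_nonneg Φm) (by positivity) hsm.le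
    rcases hcase with hΦl | hΦm
    · have : Φl ^ 2 / (ηl * y + σn * f y) ^ 2 < Φl ^ 2 / (ηl * x + σn * f x) ^ 2 :=
        div_lt_div_of_pos_left hΦl (by positivity) hsl
      simp only [hg]
      linarith
    · have : Φm ^ 2 / (ηm * y + σn * f y) ^ 2 < Φm ^ 2 / (ηm * x + σn * f x) ^ 2 :=
        div_lt_div_of_pos_left hΦm (by positivity) hsm
      simp only [hg]
      linarith
  -- which Φ is nonzero: get a dominating single term
  have hcase : 0 < Φl ^ 2 ∨ 0 < Φm ^ 2 := by
    by_contra h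
    push_neg at h
    nlinarith [sq_nonneg Φl, sq_nonneg Φm]
  obtain ⟨η₀, Φ₀, hη₀, hΦ₀, hbound⟩ :
      ∃ η₀ Φ₀ : ℝ, 0 < η₀ ∧ 0 < Φ₀ ^ 2 ∧
        ∀ θ : ℝ, 0 < θ → Φ₀ ^ 2 / (η₀ * θ + σn * f θ) ^ 2 ≤ g θ := by
    rcases hcase with hΦl | hΦm
    · refine ⟨ηl, Φl, hηl, hΦl, fun θ hθ => ?_⟩
      have := dpos ηm hηm θ hθ
      have : 0 ≤ Φm ^ 2 / (ηm * θ + σn * f θ) ^ 2 := by positivity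
      simp only [hg]; linarith
    · refine ⟨ηm, Φm, hηm, hΦm, fun θ hθ => ?_⟩
      have := dpos ηl hηl θ hθ
      have : 0 ≤ Φl ^ 2 / (ηl * θ + σn * f θ) ^ 2 := by positivity
      simp only [hg]; linarith
  -- find a small point a with g a ≥ 1
  have htend : Filter.Tendsto (fun θ => η₀ * θ + σn * f θ) (nhdsWithin 0 (Set.Ici 0))
      (nhds 0) := by
    have h1 : Filter.Tendsto f (nhdsWithin 0 (Set.Ici 0)) (nhds 0) := by
      have := (hfc 0 (Set.mem_Ici.2 le_rfl))
      rw [ContinuousWithinAt, hf0] at this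
      exact this
    have h2 : Filter.Tendsto (fun θ : ℝ => η₀ * θ) (nhdsWithin 0 (Set.Ici 0)) (nhds 0) := by
      have : Filter.Tendsto (fun θ : ℝ => η₀ * θ) (nhds 0) (nhds (η₀ * 0)) :=
        (continuous_const.mul continuous_id).tendsto 0
      simpa using this.mono_left nhdsWithin_le_nhds
    have := h2.add ((Filter.Tendsto.const_mul σn h1))
    simpa using this
  have htend' : Filter.Tendsto (fun θ => η₀ * θ + σn * f θ) (nhdsWithin 0 (Set.Ioi 0))
      (nhds 0) := htend.mono_left (nhdsWithin_mono 0 Set.Ioi_subset_Ici_self)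
  have hΦ₀ne : (0:ℝ) < |Φ₀| := abs_pos.2 (fun h => by simp [h] at hΦ₀)
  have hev : ∀ᶠ θ in nhdsWithin 0 (Set.Ioi 0),
      (fun θ => η₀ * θ + σn * f θ) θ < |Φ₀| :=
    htend'.eventually_lt_const hΦ₀ne
  have hmem : ∀ᶠ θ in nhdsWithin 0 (Set.Ioi 0), θ ∈ Set.Ioi (0:ℝ) :=
    self_mem_nhdsWithin
  obtain ⟨a, ha1, ha2⟩ := (hev.and hmem).exists
  have ha1' : η₀ * a + σn * f a < |Φ₀| := ha1
  have hapos : 0 < a := ha2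
  have hga : 1 ≤ g a := by
    have hd := dpos η₀ hη₀ a hapos
    have hsq : (η₀ * a + σn * f a) ^ 2 < Φ₀ ^ 2 := by
      have h1 : (η₀ * a + σn * f a) ^ 2 < |Φ₀| ^ 2 := by nlinarith [abs_nonneg Φ₀, ha1']
      simpa [sq_abs] using h1
    have h2 : (1:ℝ) < Φ₀ ^ 2 / (η₀ * a + σn * f a) ^ 2 :=
      (one_lt_div (by positivity)).2 hsq
    exact le_trans h2.le (hbound a hapos)
  -- find a large point b with g b ≤ 1
  set C : ℝ := Φl ^ 2 / ηl ^ 2 + Φm ^ 2 / ηm ^ 2 with hC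
  have hCnn : 0 ≤ C := by positivity
  set b : ℝ := max a (Real.sqrt C + 1) with hb
  have hba : a ≤ b := le_max_left _ _
  have hbpos : 0 < b := lt_of_lt_of_le (by positivity) (le_max_right _ _)
  have hbsq : C < b ^ 2 := by
    have h1 : Real.sqrt C < b := lt_of_lt_of_le (by linarith) (le_max_right _ _)
    have h2 : Real.sqrt C ^ 2 = C := Real.sq_sqrt hCnn
    nlinarith [Real.sqrt_nonneg C]
  clear_value C b
  have hgb : g b ≤ 1 := by
    have hfb := hfnn b hbpos.le
    have hσf : 0 ≤ σn * f b := mul_nonneg hσn.le hfb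
    have hdl : ηl * b ≤ ηl * b + σn * f b := le_add_of_nonneg_right hσf
    have hdm : ηm * b ≤ ηm * b + σn * f b := le_add_of_nonneg_right hσf
    have hdlp : 0 < ηl * b := by positivity
    have hdmp : 0 < ηm * b := by positivity
    have h1 : Φl ^ 2 / (ηl * b + σn * f b) ^ 2 ≤ Φl ^ 2 / (ηl * b) ^ 2 :=
      div_le_div_of_nonneg_left (sq_nonneg Φl) (by positivity)
        (pow_le_pow_left₀ hdlp.le hdl 2)
    have h2 : Φm ^ 2 / (ηm * b + σn * f b) ^ 2 ≤ Φm ^ 2 / (ηm * b) ^ 2 :=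
      div_le_div_of_nonneg_left (sq_nonneg Φm) (by positivity)
        (pow_le_pow_left₀ hdmp.le hdm 2)
    have h3 : Φl ^ 2 / (ηl * b) ^ 2 + Φm ^ 2 / (ηm * b) ^ 2 = C / b ^ 2 := by
      rw [hC]
      field_simp
    have h4 : C / b ^ 2 ≤ 1 := by
      rw [div_le_one (by positivity)]
      linarith
    simp only [hg]
    linarith
  -- continuity of g on [a, b]
  have hsub : Set.Icc a b ⊆ Set.Ici (0:ℝ) := fun x hx => le_trans hapos.le hx.1
  have hgc : ContinuousOn g (Set.Icc a b) := by
    have hfc' : ContinuousOn f (Set.Icc a b) := hfc.mono hsub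
    have hdl0 : ContinuousOn (fun θ => ηl * θ + σn * f θ) (Set.Icc a b) :=
      ((continuous_const.mul continuous_id).continuousOn).add (continuousOn_const.mul hfc')
    have hdm0 : ContinuousOn (fun θ => ηm * θ + σn * f θ) (Set.Icc a b) :=
      ((continuous_const.mul continuous_id).continuousOn).add (continuousOn_const.mul hfc')
    have hdl : ContinuousOn (fun θ => (ηl * θ + σn * f θ) ^ 2) (Set.Icc a b) := hdl0.pow 2
    have hdm : ContinuousOn (fun θ => (ηm * θ + σn * f θ) ^ 2) (Set.Icc a b) := hdm0.pow 2
    have hnl : ∀ x ∈ Set.Icc a b, (ηl * x + σn * f x) ^ 2 ≠ 0 := by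
      intro x hx
      have := dpos ηl hηl x (lt_of_lt_of_le hapos hx.1)
      positivity
    have hnm : ∀ x ∈ Set.Icc a b, (ηm * x + σn * f x) ^ 2 ≠ 0 := by
      intro x hx
      have := dpos ηm hηm x (lt_of_lt_of_le hapos hx.1)
      positivity
    have h1 : ContinuousOn (fun θ => Φl ^ 2 / (ηl * θ + σn * f θ) ^ 2) (Set.Icc a b) :=
      continuousOn_const.div hdl hnl
    have h2 : ContinuousOn (fun θ => Φm ^ 2 / (ηm * θ + σn * f θ) ^ 2) (Set.Icc a b) :=
      continuousOn_const.div hdm hnm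
    rw [hg]
    exact h1.add h2
  -- IVT
  have h1mem : (1:ℝ) ∈ Set.Icc (g b) (g a) := ⟨hgb, hga⟩
  obtain ⟨θ₀, hθ₀mem, hθ₀⟩ := intermediate_value_Icc' hba hgc h1mem
  have hθ₀pos : 0 < θ₀ := lt_of_lt_of_le hapos hθ₀mem.1
  refine ⟨θ₀, ⟨hθ₀pos, ?_⟩, ?_⟩
  · rw [key θ₀, hθ₀, Real.sqrt_one]
  · rintro y ⟨hypos, hy1⟩
    have hgy : g y = 1 := gθ_of y hy1
    rcases lt_trichotomy y θ₀ with h | h | h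
    · exact absurd (ganti y θ₀ hypos h) (by rw [hgy, hθ₀]; exact lt_irrefl 1)
    · exact h
    · exact absurd (ganti θ₀ y hθ₀pos h) (by rw [hgy, hθ₀]; exact lt_irrefl 1)
end

section
/- (Pointwise discrete interface dissipation, core of Theorem 4.4.) Let Z⁺, Z⁻ > 0, η > 0 with η = Z⁺Z⁻/(Z⁺+Z⁻), and α̂ ≥ 0 be real constants, and let v⁺, T⁺, v⁻, T⁻, v̂⁺, v̂⁻, T̂ be real numbers satisfying: Z⁺·v̂⁺ + T̂ = Z⁺·v⁺ + T⁺, Z⁻·v̂⁻ − T̂ = Z⁻·v⁻ − T⁻, and the friction law T̂ = α̂·(v̂⁺ − v̂⁻). Define G⁺ = ½Z⁺(v⁺ − v̂⁺) − ½(T⁺ − T̂), G̃⁺ = G⁺/Z⁺, G⁻ = ½Z⁻(v⁻ − v̂⁻) + ½(T⁻ − T̂), G̃⁻ = G⁻/Z⁻. Then (v⁺·G⁺ − T⁺·G̃⁺ + v⁺·T⁺) + (v⁻·G⁻ + T⁻·G̃⁻ − v⁻·T⁻) = (G⁺)²/Z⁺ + (G⁻)²/Z⁻ + α̂·(v̂⁺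 − v̂⁻)² ≥ 0. -/
/-- Pointwise discrete interface dissipation (core of Theorem 4.4). -/
theorem pointwise_discrete_interface_dissipation
    (Zp Zm η αh : ℝ) (hZp : 0 < Zp) (hZm : 0 < Zm) (hη : 0 < η)
    (hηdef : η = Zp * Zm / (Zp + Zm)) (hα : 0 ≤ αh)
    (vP TP vM TM vhP vhM That : ℝ)
    (hcharP : Zp * vhP + That = Zp * vP + TP)
    (hcharM : Zm * vhM - That = Zm * vM - TM)
    (hfric : That = αh * (vhP - vhM))
    (GP GtP GM GtM : ℝ)
    (hGP : GP = (1 / 2) * Zp * (vP - vhP) - (1 / 2) * (TP - That))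
    (hGtP : GtP = GP / Zp)
    (hGM : GM = (1 / 2) * Zm * (vM - vhM) + (1 / 2) * (TM - That))
    (hGtM : GtM = GM / Zm) :
    (vP * GP - TP * GtP + vP * TP) + (vM * GM + TM * GtM - vM * TM)
      = GP ^ 2 / Zp + GM ^ 2 / Zm + αh * (vhP - vhM) ^ 2 ∧
    0 ≤ GP ^ 2 / Zp + GM ^ 2 / Zm + αh * (vhP - vhM) ^ 2 := by
  have hZp' : Zp ≠ 0 := hZp.ne'
  have hZm' : Zm ≠ 0 := hZm.ne'
  have h1 : GP = Zp * (vP - vhP) := by rw [hGP]; linarith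
  have h2 : GM = Zm * (vM - vhM) := by rw [hGM]; linarith
  have e1 : GtP = vP - vhP := by rw [hGtP, h1]; field_simp
  have e2 : GtM = vM - vhM := by rw [hGtM, h2]; field_simp
  have q1 : GP ^ 2 / Zp = Zp * (vP - vhP) ^ 2 := by rw [h1]; field_simp
  have q2 : GM ^ 2 / Zm = Zm * (vM - vhM) ^ 2 := by rw [h2]; field_simp
  constructor
  · rw [q1, q2, h1, h2, e1, e2]
    linear_combination (vhP - vhM) * hfric - vhP * hcharP - vhM * hcharM
  · have := sq_nonneg (vhP - vhM)
    have := div_nonneg (sq_nonneg GP) hZp.le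
    have := div_nonneg (sq_nonneg GM) hZm.le
    positivity
end

section
/- (Semi-discrete energy identity for the 1D wave system with dual-pairing SBP operators, 1D content of Theorem 4.3.) Let n ∈ ℕ, let H be an (n+1)×(n+1) real diagonal matrix with positive diagonal entries, and let D₊, D₋ be (n+1)×(n+1) real matrices satisfying the SBP property: for all f, g ∈ ℝ^(n+1), (D₊ f)ᵀ H g + fᵀ H (D₋ g) = f(n)·g(n) − f(0)·g(0). Let v, σ : ℝ → ℝ^(n+1) be differentiable and satisfy the semi-discrete 1D wave system dv/dt = D₋ σ and dσ/dt = D₊ v. Then the discrete energy E(t) = (1/2)·( v(t)ᵀ H v(t) + σ(t)ᵀ H σ(t) ) satisfies dE/dt = v(t)(n)·σ(t)(n) − v(t)(0)·σ(t)(0). -/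
/-!
Differentiating the quadratic form `xᵀ H x` for symmetric `H` gives `2 xᵀ H x'`, so
`E' = vᵀ H (D₋ σ) + σᵀ H (D₊ v)`; by symmetry of `H` the second term is `(D₊ v)ᵀ H σ`, and the
sum is exactly the left-hand side of the SBP identity with `f = v`, `g = σ`.
-/

open Matrix

theorem Matrix.IsSymm.dotProduct_mulVec_comm {ι R : Type*} [Fintype ι] [CommSemiring R]
    {A : Matrix ι ι R} (hA : A.IsSymm) (x y : ι → R) :
    x ⬝ᵥ A *ᵥ y = y ⬝ᵥ A *ᵥ x := by
  rw [dotProduct_mulVec, dotProduct_comm, ← vecMul_transpose, hA.eq]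

section HasDerivAt

variable {𝕜 ι : Type*} [NontriviallyNormedField 𝕜] [Fintype ι] {f g : 𝕜 → ι → 𝕜}
  {f' g' : ι → 𝕜} {t : 𝕜}

theorem HasDerivAt.dotProduct (hf : HasDerivAt f f' t) (hg : HasDerivAt g g' t) :
    HasDerivAt (fun s => f s ⬝ᵥ g s) (f' ⬝ᵥ g t + f t ⬝ᵥ g') t := by
  rw [hasDerivAt_pi] at hf hg
  exact (HasDerivAt.fun_sum fun i _ => (hf i).fun_mul (hg i)).congr_deriv
    Finset.sum_add_distrib

theorem HasDerivAt.mulVec {m : Type*} (A : Matrix m ι 𝕜) (hf : HasDerivAt f f' t) :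
    HasDerivAt (fun s => A *ᵥ f s) (A *ᵥ f') t :=
  hasDerivAt_pi.2 fun i => ((hasDerivAt_const t (A i)).dotProduct hf).congr_deriv
    (by rw [zero_dotProduct, zero_add]; rfl)

theorem Matrix.IsSymm.hasDerivAt_dotProduct_mulVec_self {A : Matrix ι ι 𝕜} (hA : A.IsSymm)
    (hf : HasDerivAt f f' t) :
    HasDerivAt (fun s => f s ⬝ᵥ A *ᵥ f s) (2 * (f t ⬝ᵥ A *ᵥ f')) t := by
  convert hf.dotProduct (hf.mulVec A) using 1
  rw [hA.dotProduct_mulVec_comm f']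
  ring

end HasDerivAt
/-- Semi-discrete energy identity for the 1D wave system with dual-pairing SBP
operators (1D content of Theorem 4.3): the energy rate reduces to boundary terms. -/
theorem dp_sbp_semidiscrete_energy_identity
    (n : ℕ)
    (H Dp Dm : Matrix (Fin (n + 1)) (Fin (n + 1)) ℝ)
    (hHdiag : ∃ d : Fin (n + 1) → ℝ, (∀ i, 0 < d i) ∧ H = Matrix.diagonal d)
    (hSBP : ∀ f g : Fin (n + 1) → ℝ,
        (Dp.mulVec f) ⬝ᵥ (H.mulVec g) + f ⬝ᵥ (H.mulVec (Dm.mulVec g))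
          = f (Fin.last n) * g (Fin.last n) - f 0 * g 0)
    (v σ : ℝ → Fin (n + 1) → ℝ)
    (hv : ∀ t, HasDerivAt v (Dm.mulVec (σ t)) t)
    (hσ : ∀ t, HasDerivAt σ (Dp.mulVec (v t)) t)
    (E : ℝ → ℝ)
    (hE : ∀ t, E t = (1 / 2) * ((v t) ⬝ᵥ (H.mulVec (v t))
        + (σ t) ⬝ᵥ (H.mulVec (σ t)))) :
    ∀ t, HasDerivAt E
      (v t (Fin.last n) * σ t (Fin.last n) - v t 0 * σ t 0) t := by
  intro t
  obtain ⟨d, -, rfl⟩ := hHdiag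
  have hH : (diagonal d).IsSymm := isSymm_diagonal d
  rw [funext hE]
  refine (((hH.hasDerivAt_dotProduct_mulVec_self (hv t)).fun_add
    (hH.hasDerivAt_dotProduct_mulVec_self (hσ t))).const_mul (1 / 2 : ℝ)).congr_deriv ?_
  rw [hH.dotProduct_mulVec_comm (σ t), ← hSBP (v t) (σ t)]
  ring
end
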